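/- For all ordinals α and β, the natural (Hessenberg) sum α ♯ β equals the supremum, over all natural numbers n and all decompositions α = α₁ + ⋯ + αₙ and β = β₁ + ⋯ + βₙ into ordinal sums, of the shuffled ordinal sum α₁ + β₁ + α₂ + β₂ + ⋯ + αₙ + βₙ. -/

import Mathlib

universe u

namespace Ordinal

noncomputable def nadd : Ordinal.{u} → Ordinal.{u} → Ordinal.{u}
  | a, b =>
    max (blsub.{u, u} a fun a' _ => nadd a' b) (blsub.{u, u} b fun b' _ => nadd a b')
termination_by o₁ o₂ => (o₁, o₂)

end Ordinal

infixl:65 " ♯ " => Ordinal.nadd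

open Ordinal
/-!
A shuffled sum is at most `α ♯ β` because `x ♯ y + c` is bounded by both `x ♯ (y + c)` and
`(x + c) ♯ y`, so the terms can be absorbed one at a time.

Conversely `α ♯ β` is itself a shuffled sum. Let `o = ω ^ e` be the largest power of `ω` not
exceeding `max α β`, and divide: `α = o * m + r`, `β = o * n + s` with `m n : ℕ` and `r s < o`.
Since `o` is closed under `♯`, the identities `o * γ ♯ t = o * γ + t` for `t < o` and
`o * σ ♯ o * τ = o * (σ ♯ τ)` hold, whence `α ♯ β = o * m + o * n + (r ♯ s)`: the pair
`(o * m, o * n)` followed by a shuffle realising `r ♯ s` does the job.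
-/

namespace Ordinal

variable {a b c d : Ordinal.{u}}

theorem lt_nadd_iff : a < b ♯ c ↔ (∃ b' < b, a ≤ b' ♯ c) ∨ ∃ c' < c, a ≤ b ♯ c' := by
  rw [nadd]
  simp [lt_blsub_iff]

theorem nadd_le_iff : b ♯ c ≤ a ↔ (∀ b' < b, b' ♯ c < a) ∧ ∀ c' < c, b ♯ c' < a := by
  rw [nadd]
  simp [blsub_le_iff]

theorem nadd_lt_nadd_left (h : b < c) (a : Ordinal.{u}) : a ♯ b < a ♯ c :=
  lt_nadd_iff.2 (Or.inr ⟨b, h, le_rfl⟩)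

theorem nadd_lt_nadd_right (h : b < c) (a : Ordinal.{u}) : b ♯ a < c ♯ a :=
  lt_nadd_iff.2 (Or.inl ⟨b, h, le_rfl⟩)

theorem nadd_le_nadd_left (h : b ≤ c) (a : Ordinal.{u}) : a ♯ b ≤ a ♯ c :=
  (StrictMono.monotone fun _ _ h ↦ nadd_lt_nadd_left h a) h

theorem nadd_le_nadd_right (h : b ≤ c) (a : Ordinal.{u}) : b ♯ a ≤ c ♯ a :=
  (StrictMono.monotone fun _ _ h ↦ nadd_lt_nadd_right h a) h

theorem nadd_lt_nadd (hab : a < b) (hcd : c < d) : a ♯ c < b ♯ d :=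
  (nadd_lt_nadd_left hcd a).trans (nadd_lt_nadd_right hab d)

theorem le_nadd_right (a b : Ordinal.{u}) : a ≤ a ♯ b :=
  StrictMono.le_apply (f := (· ♯ b)) fun _ _ h ↦ nadd_lt_nadd_right h b

private theorem nadd_comm_le (a b : Ordinal.{u}) : a ♯ b ≤ b ♯ a := by
  induction a using WellFoundedLT.induction generalizing b with | _ a iha
  induction b using WellFoundedLT.induction with | _ b ihb
  refine nadd_le_iff.2 ⟨fun a' ha' ↦ ?_, fun b' hb' ↦ ?_⟩
  · exact (iha a' ha' b).trans_lt (nadd_lt_nadd_left ha' b)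
  · exact (ihb b' hb').trans_lt (nadd_lt_nadd_right hb' a)

theorem nadd_comm (a b : Ordinal.{u}) : a ♯ b = b ♯ a :=
  (nadd_comm_le a b).antisymm (nadd_comm_le b a)

private theorem nadd_assoc_le (a b c : Ordinal.{u}) : a ♯ b ♯ c ≤ a ♯ (b ♯ c) := by
  induction a using WellFoundedLT.induction generalizing b c with | _ a iha
  induction b using WellFoundedLT.induction generalizing c with | _ b ihb
  induction c using WellFoundedLT.induction with | _ c ihc
  refine nadd_le_iff.2 ⟨fun x hx ↦ ?_, fun c' hc' ↦ ?_⟩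
  · rcases lt_nadd_iff.1 hx with ⟨a', ha', hx⟩ | ⟨b', hb', hx⟩
    · calc x ♯ c ≤ a' ♯ b ♯ c := nadd_le_nadd_right hx c
        _ ≤ a' ♯ (b ♯ c) := iha a' ha' b c
        _ < a ♯ (b ♯ c) := nadd_lt_nadd_right ha' _
    · calc x ♯ c ≤ a ♯ b' ♯ c := nadd_le_nadd_right hx c
        _ ≤ a ♯ (b' ♯ c) := ihb b' hb' c
        _ < a ♯ (b ♯ c) := nadd_lt_nadd_left (nadd_lt_nadd_right hb' c) a
  · exact (ihc c' hc').trans_lt (nadd_lt_nadd_left (nadd_lt_nadd_left hc' b) a)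

theorem nadd_assoc (a b c : Ordinal.{u}) : a ♯ b ♯ c = a ♯ (b ♯ c) := by
  refine (nadd_assoc_le a b c).antisymm ?_
  simpa only [nadd_comm] using nadd_assoc_le c b a

theorem nadd_nadd_nadd_comm (a b c d : Ordinal.{u}) : a ♯ b ♯ (c ♯ d) = a ♯ c ♯ (b ♯ d) := by
  rw [nadd_assoc, ← nadd_assoc b, nadd_comm b c, nadd_assoc c, ← nadd_assoc]

@[simp]
theorem nadd_zero (a : Ordinal.{u}) : a ♯ 0 = a := by
  induction a using WellFoundedLT.induction with | _ a ih
  refine le_antisymm (nadd_le_iff.2 ⟨fun a' ha' ↦ ?_, fun c' hc' ↦ ?_⟩) (le_nadd_right a 0)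
  · rwa [ih a' ha']
  · exact (not_lt_zero hc').elim

theorem nadd_add_le (a b c : Ordinal.{u}) : a ♯ b + c ≤ a ♯ (b + c) := by
  induction c using WellFoundedLT.induction with | _ c ih
  refine le_of_forall_lt fun x hx ↦ ?_
  rcases eq_or_ne c 0 with rfl | hc
  · simpa using hx
  obtain ⟨c', hc', hx⟩ := (lt_add_iff hc).1 hx
  exact hx.trans_lt ((ih c' hc').trans_lt (nadd_lt_nadd_left (add_lt_add_right hc' b) a))

theorem add_nadd_le (a b c : Ordinal.{u}) : a ♯ b + c ≤ (a + c) ♯ b := by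
  simpa only [nadd_comm _ b] using nadd_add_le b a c

theorem add_le_nadd (a b : Ordinal.{u}) : a + b ≤ a ♯ b := by
  simpa using nadd_add_le a 0 b

theorem nadd_add_one (a b : Ordinal.{u}) : a ♯ (b + 1) = a ♯ b + 1 := by
  induction a using WellFoundedLT.induction with | _ a ih
  refine le_antisymm (nadd_le_iff.2 ⟨fun a' ha' ↦ ?_, fun b' hb' ↦ ?_⟩) (nadd_add_le a b 1)
  · rw [ih a' ha', Order.lt_add_one_iff]
    exact Order.add_one_le_of_lt (nadd_lt_nadd_right ha' b)
  · exact Order.lt_add_one_iff.2 (nadd_le_nadd_left (Order.lt_add_one_iff.1 hb') a)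

theorem nadd_natCast (a : Ordinal.{u}) (n : ℕ) : a ♯ n = a + n := by
  induction n with
  | zero => simp
  | succ n ih => rw [Nat.cast_add_one, nadd_add_one, ih, add_assoc]

theorem nadd_add_sum_zipWith_le (as bs : List Ordinal.{u}) (h : as.length = bs.length)
    (x y : Ordinal.{u}) :
    x ♯ y + (List.zipWith (· + ·) as bs).sum ≤ (x + as.sum) ♯ (y + bs.sum) := by
  induction as generalizing bs x y with
  | nil => cases bs <;> simp_all
  | cons a as ih =>
    obtain _ | ⟨b, bs⟩ := bs
    · simp at h
    simp only [List.zipWith_cons_cons, List.sum_cons, List.length_cons, add_left_inj] at h ⊢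
    calc x ♯ y + (a + b + (List.zipWith (· + ·) as bs).sum)
        = x ♯ y + a + b + (List.zipWith (· + ·) as bs).sum := by simp only [add_assoc]
      _ ≤ (x + a) ♯ (y + b) + (List.zipWith (· + ·) as bs).sum := by
        gcongr
        exact (add_le_add_left (add_nadd_le x y a) b).trans (nadd_add_le _ _ _)
      _ ≤ (x + a + as.sum) ♯ (y + b + bs.sum) := ih bs h _ _
      _ = (x + (a + as.sum)) ♯ (y + (b + bs.sum)) := by simp only [add_assoc]

theorem mul_add_lt_mul {o q r γ : Ordinal.{u}} (hr : r < o) (hq : q < γ) : o * q + r < o * γ :=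
  calc o * q + r < o * q + o := add_lt_add_right hr _
    _ = o * (q + 1) := (mul_add_one o q).symm
    _ ≤ o * γ := mul_le_mul_right (Order.add_one_le_of_lt hq) o

theorem mul_add_le_mul_nadd_mul {o σ σ' τ : Ordinal.{u}} (hσ : σ' < σ)
    (hrec : o * σ' ♯ o * τ = o * (σ' ♯ τ)) : o * (σ' ♯ τ) + o ≤ o * σ ♯ o * τ :=
  calc o * (σ' ♯ τ) + o = o * σ' ♯ o * τ + o := by rw [hrec]
    _ ≤ (o * σ' + o) ♯ o * τ := add_nadd_le _ _ _
    _ = o * (σ' + 1) ♯ o * τ := by rw [mul_add_one]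
    _ ≤ o * σ ♯ o * τ := nadd_le_nadd_right (mul_le_mul_right (Order.add_one_le_of_lt hσ) o) _

section IsPrincipal

variable {o : Ordinal.{u}}

theorem IsPrincipal.mul_nadd (hp : IsPrincipal (· ♯ ·) o) (γ : Ordinal.{u}) {t : Ordinal.{u}}
    (ht : t < o) : o * γ ♯ t = o * γ + t := by
  have ho : o ≠ 0 := (pos_of_gt ht).ne'
  induction γ using WellFoundedLT.induction generalizing t with | _ γ ihγ
  induction t using WellFoundedLT.induction with | _ t iht
  refine le_antisymm (nadd_le_iff.2 ⟨fun x hx ↦ ?_, fun t' ht' ↦ ?_⟩) (add_le_nadd _ _)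
  · have hq : x / o < γ := (lt_mul_iff_div_lt ho).1 hx
    have hr : x % o ♯ t < o := hp (mod_lt x ho) ht
    calc x ♯ t = (o * (x / o) + x % o) ♯ t := by rw [div_add_mod]
      _ ≤ o * (x / o) ♯ (x % o) ♯ t := nadd_le_nadd_right (add_le_nadd _ _) t
      _ = o * (x / o) + (x % o ♯ t) := by rw [nadd_assoc, ihγ _ hq hr]
      _ < o * γ := mul_add_lt_mul hr hq
      _ ≤ o * γ + t := le_self_add
  · rw [iht t' ht' (ht'.trans ht)]
    exact add_lt_add_right ht' _

theorem IsPrincipal.mul_add_nadd_mul_add (hp : IsPrincipal (· ♯ ·) o) {a b r s : Ordinal.{u}}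
    (hab : o * a ♯ o * b = o * (a ♯ b)) (hr : r < o) (hs : s < o) :
    (o * a + r) ♯ (o * b + s) = o * (a ♯ b) + (r ♯ s) := by
  have hrs : r ♯ s < o := hp hr hs
  rw [← hp.mul_nadd a hr, ← hp.mul_nadd b hs, nadd_nadd_nadd_comm, hab, hp.mul_nadd _ hrs]

theorem IsPrincipal.nadd_mul_lt (hp : IsPrincipal (· ♯ ·) o) {x σ τ : Ordinal.{u}}
    (hx : x < o * σ) (hrec : o * (x / o) ♯ o * τ = o * (x / o ♯ τ)) :
    x ♯ o * τ < o * (σ ♯ τ) := by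
  have ho : o ≠ 0 := by rintro rfl; simp at hx
  calc x ♯ o * τ = (o * (x / o) + x % o) ♯ (o * τ + 0) := by rw [div_add_mod, add_zero]
    _ = o * (x / o ♯ τ) + x % o := by
      rw [hp.mul_add_nadd_mul_add hrec (mod_lt x ho) (pos_iff_ne_zero.2 ho), nadd_zero]
    _ < o * (σ ♯ τ) :=
      mul_add_lt_mul (mod_lt x ho) (nadd_lt_nadd_right ((lt_mul_iff_div_lt ho).1 hx) τ)

theorem IsPrincipal.mul_nadd_mul (hp : IsPrincipal (· ♯ ·) o) (σ τ : Ordinal.{u}) :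
    o * σ ♯ o * τ = o * (σ ♯ τ) := by
  rcases eq_or_ne o 0 with rfl | ho
  · simp
  induction σ using WellFoundedLT.induction generalizing τ with | _ σ ihσ
  induction τ using WellFoundedLT.induction with | _ τ ihτ
  refine le_antisymm (nadd_le_iff.2 ⟨fun x hx ↦ ?_, fun y hy ↦ ?_⟩) (le_of_forall_lt fun z hz ↦ ?_)
  · exact hp.nadd_mul_lt hx (ihσ _ ((lt_mul_iff_div_lt ho).1 hx) τ)
  · rw [nadd_comm, nadd_comm σ]
    refine hp.nadd_mul_lt hy ?_
    rw [nadd_comm, nadd_comm (y / o)]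
    exact ihτ _ ((lt_mul_iff_div_lt ho).1 hy)
  · refine (lt_mul_div_add z ho).trans_le ?_
    rcases lt_nadd_iff.1 ((lt_mul_iff_div_lt ho).1 hz) with ⟨σ', hσ', h⟩ | ⟨τ', hτ', h⟩
    · exact (add_le_add_left (mul_le_mul_right h o) o).trans
        (mul_add_le_mul_nadd_mul hσ' (ihσ σ' hσ' τ))
    · rw [nadd_comm] at h ⊢
      exact (add_le_add_left (mul_le_mul_right h o) o).trans
        (mul_add_le_mul_nadd_mul hτ' (by rw [nadd_comm, nadd_comm τ']; exact ihτ τ' hτ'))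

end IsPrincipal

theorem isPrincipal_nadd_omega0_opow (b : Ordinal.{u}) : IsPrincipal (· ♯ ·) (ω ^ b) := by
  induction b using WellFoundedLT.induction with | _ b ih
  rcases eq_or_ne b 0 with rfl | hb
  · rw [opow_zero, isPrincipal_one_iff, nadd_zero]
  intro x y hx hy
  obtain ⟨c, hc, m, hm⟩ := (lt_omega0_opow hb).1 hx
  obtain ⟨d, hd, n, hn⟩ := (lt_omega0_opow hb).1 hy
  have hcd : max c d < b := max_lt hc hd
  have hle : ∀ e ≤ max c d, ∀ j ≤ m + n, ω ^ e * (j : Ordinal) ≤ ω ^ max c d * (m + n : ℕ) :=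
    fun e he j hj ↦ by gcongr; exact omega0_pos
  have hx' := hm.trans_le (hle c (le_max_left c d) m (Nat.le_add_right m n))
  have hy' := hn.trans_le (hle d (le_max_right c d) n (Nat.le_add_left n m))
  calc x ♯ y < ω ^ max c d * (m + n : ℕ) ♯ ω ^ max c d * (m + n : ℕ) := nadd_lt_nadd hx' hy'
    _ = ω ^ max c d * (m + n + (m + n) : ℕ) := by
      rw [(ih _ hcd).mul_nadd_mul, nadd_natCast, Nat.cast_add (m + n)]
    _ < ω ^ b := opow_mul_lt_opow (natCast_lt_omega0 _) hcd

def shuffleSums (α β : Ordinal.{u}) : Set Ordinal.{u} :=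
  { o | ∃ as bs : List Ordinal.{u}, as.length = bs.length ∧
    as.sum = α ∧ bs.sum = β ∧ (List.zipWith (· + ·) as bs).sum = o }

theorem nadd_mem_upperBounds_shuffleSums (α β : Ordinal.{u}) :
    α ♯ β ∈ upperBounds (shuffleSums α β) := by
  rintro _ ⟨as, bs, hlen, rfl, rfl, rfl⟩
  simpa using nadd_add_sum_zipWith_le as bs hlen 0 0

theorem nadd_mem_shuffleSums (α β : Ordinal.{u}) : α ♯ β ∈ shuffleSums α β := by
  rcases eq_or_ne (max α β) 0 with h | h
  · obtain ⟨rfl, rfl⟩ : α = 0 ∧ β = 0 := by simpa using h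
    exact ⟨[], [], rfl, rfl, rfl, by simp⟩
  set o := ω ^ log ω (max α β)
  have ho : o ≠ 0 := opow_ne_zero _ omega0_ne_zero
  have hp : IsPrincipal (· ♯ ·) o := isPrincipal_nadd_omega0_opow _
  have hdiv : ∀ x ≤ max α β, x / o < ω := fun x hx ↦ by
    rw [← lt_mul_iff_div_lt ho, ← opow_succ]
    exact hx.trans_lt (lt_opow_succ_log_self one_lt_omega0 _)
  obtain ⟨m, hm⟩ := lt_omega0.1 (hdiv α (le_max_left α β))
  obtain ⟨n, hn⟩ := lt_omega0.1 (hdiv β (le_max_right α β))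
  obtain ⟨rs, ss, hlen, hr, hs, hsum⟩ := nadd_mem_shuffleSums (α % o) (β % o)
  refine ⟨o * m :: rs, o * n :: ss, by simp [hlen], ?_, ?_, ?_⟩
  · rw [List.sum_cons, hr, ← hm, div_add_mod]
  · rw [List.sum_cons, hs, ← hn, div_add_mod]
  · have key :=
      hp.mul_add_nadd_mul_add (hp.mul_nadd_mul (α / o) (β / o)) (mod_lt α ho) (mod_lt β ho)
    rw [div_add_mod, div_add_mod, hm, hn, nadd_natCast, mul_add] at key
    rw [List.zipWith_cons_cons, List.sum_cons, hsum, key]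
termination_by max α β
decreasing_by
  exact max_lt ((mod_lt α ho).trans_le (opow_log_le_self ω h))
    ((mod_lt β ho).trans_le (opow_log_le_self ω h))

theorem isGreatest_shuffleSums (α β : Ordinal.{u}) : IsGreatest (shuffleSums α β) (α ♯ β) :=
  ⟨nadd_mem_shuffleSums α β, nadd_mem_upperBounds_shuffleSums α β⟩

end Ordinal

/-- The natural (Hessenberg) sum `α ♯ β` is the supremum of all "shuffled" ordinal sums
`α₁ + β₁ + α₂ + β₂ + ⋯ + αₙ + βₙ` over all decompositions `α = α₁ + ⋯ + αₙ` and
`β = β₁ + ⋯ + βₙ` into ordinal sums. -/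
theorem nadd_eq_sSup_shuffles (α β : Ordinal.{u}) :
    α ♯ β = sSup { o : Ordinal.{u} |
      ∃ as bs : List Ordinal.{u}, as.length = bs.length ∧
        as.sum = α ∧ bs.sum = β ∧ (List.zipWith (· + ·) as bs).sum = o } :=
  (isGreatest_shuffleSums α β).csSup_eq.symm
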